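/- arXiv:1006.4657 — 2 statements merged into one kernel-verified Lean document; each statement's English description precedes it below -/
import Mathlib

section
/- Consider the underdamped harmonic oscillator with frequency ω > 0 and damping ratio 0 ≤ ζ < 1. Define B11(s) = e^{-ωζs}(cos(ω√(1-ζ²)s) + (ζ/√(1-ζ²)) sin(ω√(1-ζ²)s)) for ζ > 0 and B11(s) = cos(ωs) for ζ = 0. Then |B11(s)| ≤ 1 for all s ≥ 0. -/
/-!
Write `B₁₁(s) = e^{-x} (cos θ + k sin θ)` with `θ = ω√(1-ζ²)s`, `k = ζ/√(1-ζ²)` and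
`x = ωζs ≥ 0`.
Since `|sin θ| ≤ |θ|`, the bracket is at most `1 + k|θ| ≤ 1 + x` in absolute value, and
`e^{-x}(1 + x) ≤ 1` because `1 + x ≤ eˣ`.
-/

open Real

lemma abs_cos_add_mul_sin_le (k θ : ℝ) (hk : 0 ≤ k) :
    |cos θ + k * sin θ| ≤ 1 + k * |θ| :=
  calc |cos θ + k * sin θ| ≤ |cos θ| + k * |sin θ| := by
        simpa only [abs_mul, abs_of_nonneg hk] using abs_add_le (cos θ) (k * sin θ)
    _ ≤ 1 + k * |θ| :=
        add_le_add (abs_cos_le_one θ) (mul_le_mul_of_nonneg_left abs_sin_le_abs hk)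

lemma exp_neg_mul_one_add_le_one (x : ℝ) : exp (-x) * (1 + x) ≤ 1 :=
  calc exp (-x) * (1 + x) ≤ exp (-x) * exp x := by
        gcongr
        linarith [add_one_le_exp x]
    _ = 1 := by rw [← exp_add, neg_add_cancel, exp_zero]

lemma div_mul_mul_mul_le {a b c r : ℝ} (hr : 0 ≤ r) (habc : 0 ≤ a * b * c) :
    b / r * (a * r * c) ≤ a * b * c := by
  -- for `r = 0` (here `ζ ≥ 1`) the left side is `0` because `b / 0 = 0`
  rcases hr.eq_or_lt with rfl | hr
  · simpa using habc
  · exact (by field_simp : b / r * (a * r * c) = a * b * c).le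

theorem stmt_4_general (ω ζ s : ℝ) (hω : 0 < ω) (hζ0 : 0 ≤ ζ) (hs : 0 ≤ s) :
    |Real.exp (-(ω * ζ * s)) *
      (Real.cos (ω * Real.sqrt (1 - ζ ^ 2) * s) +
        (ζ / Real.sqrt (1 - ζ ^ 2)) * Real.sin (ω * Real.sqrt (1 - ζ ^ 2) * s))| ≤ 1 := by
  set r := √(1 - ζ ^ 2)
  have hr : 0 ≤ r := sqrt_nonneg _
  have hx : 0 ≤ ω * ζ * s := by positivity
  have hkθ : ζ / r * |ω * r * s| ≤ ω * ζ * s := by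
    rw [abs_of_nonneg (by positivity)]
    exact div_mul_mul_mul_le hr hx
  have hbracket := abs_cos_add_mul_sin_le (ζ / r) (ω * r * s) (by positivity)
  rw [abs_mul, abs_of_pos (exp_pos _)]
  calc exp (-(ω * ζ * s)) * |cos (ω * r * s) + ζ / r * sin (ω * r * s)|
      ≤ exp (-(ω * ζ * s)) * (1 + ω * ζ * s) := by gcongr; linarith
    _ ≤ 1 := exp_neg_mul_one_add_le_one _

/-- Underdamped oscillator entry `B₁₁(s)` is bounded by 1 for `s ≥ 0`. -/
theorem stmt_4 (ω ζ s : ℝ) (hω : 0 < ω) (hζ0 : 0 ≤ ζ) (hζ1 : ζ < 1) (hs : 0 ≤ s) :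
    |Real.exp (-(ω * ζ * s)) *
      (Real.cos (ω * Real.sqrt (1 - ζ ^ 2) * s) +
        (ζ / Real.sqrt (1 - ζ ^ 2)) * Real.sin (ω * Real.sqrt (1 - ζ ^ 2) * s))| ≤ 1 :=
  stmt_4_general ω ζ s hω hζ0 hs
end

section
/- For the overdamped oscillator with ω > 0, ζ > 1 (A, B as above), the entry B22(s) = (ζ(A(s)−B(s)) + √(ζ²-1)(A(s)+B(s)))/(2√(ζ²-1)) satisfies |B22(s)| ≤ 1 and |B22(s) − 1| ≤ 2ζω s for all s ≥ 0. -/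
/-!
Put `r = √(ζ² - 1)`, `a = ζ - r`, `b = ζ + r` (so `0 ≤ a < b`, `a + b = 2ζ`) and `t = ωs`. Then
`B₂₂ = e^{-bt} - a (e^{-at} - e^{-bt}) / (b - a)`, and the subtracted term lies between `0` and
`a t e^{-at} ≤ 1/e` because `e^{-at} - e^{-bt} ≤ (b - a) t e^{-at}` by `1 + y ≤ e^y`. This gives
`|B₂₂| ≤ 1`, and together with `1 - e^{-bt} ≤ bt` also `1 - B₂₂ ≤ (a + b) t`.
-/

open Real

/-- `B₂₂(s)` for `a, b = ζ ∓ √(ζ² - 1)` and `t = ωs`. -/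
noncomputable def twoRateEntry (a b t : ℝ) : ℝ :=
  (b * exp (-(b * t)) - a * exp (-(a * t))) / (b - a)

lemma exp_neg_sub_exp_neg_le (a b t : ℝ) :
    exp (-(a * t)) - exp (-(b * t)) ≤ (b - a) * t * exp (-(a * t)) := by
  have hsplit : exp (-(b * t)) = exp (-(a * t)) * exp (-((b - a) * t)) := by
    rw [← exp_add]; ring_nf
  have := mul_le_mul_of_nonneg_left (add_one_le_exp (-((b - a) * t))) (exp_pos (-(a * t))).le
  rw [hsplit]
  linarith

lemma exp_neg_sub_exp_neg_div_le {a b : ℝ} (hab : a < b) (t : ℝ) :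
    (exp (-(a * t)) - exp (-(b * t))) / (b - a) ≤ t * exp (-(a * t)) := by
  rw [div_le_iff₀ (sub_pos.mpr hab)]
  linarith [exp_neg_sub_exp_neg_le a b t]

lemma exp_neg_sub_exp_neg_div_nonneg {a b t : ℝ} (hab : a < b) (ht : 0 ≤ t) :
    0 ≤ (exp (-(a * t)) - exp (-(b * t))) / (b - a) :=
  div_nonneg (sub_nonneg.mpr (exp_le_exp.mpr (by nlinarith))) (sub_pos.mpr hab).le

lemma twoRateEntry_eq {a b : ℝ} (hab : a ≠ b) (t : ℝ) :
    twoRateEntry a b t = exp (-(b * t)) - a * ((exp (-(a * t)) - exp (-(b * t))) / (b - a)) := by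
  have : b - a ≠ 0 := sub_ne_zero.mpr hab.symm
  unfold twoRateEntry
  field_simp
  ring

lemma abs_twoRateEntry_le_one {a b t : ℝ} (ha : 0 ≤ a) (hab : a < b) (ht : 0 ≤ t) :
    |twoRateEntry a b t| ≤ 1 := by
  rw [twoRateEntry_eq hab.ne, abs_le]
  have hgap := mul_nonneg ha (exp_neg_sub_exp_neg_div_nonneg hab ht)
  have hgap_le := mul_le_mul_of_nonneg_left (exp_neg_sub_exp_neg_div_le hab t) ha
  have hpeak : a * (t * exp (-(a * t))) ≤ 1 := by
    have := mul_exp_neg_le_exp_neg_one (a * t)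
    have : exp (-1) ≤ 1 := exp_le_one_iff.mpr (by norm_num)
    rw [← mul_assoc]
    linarith
  have hdecay : exp (-(b * t)) ≤ 1 := exp_le_one_iff.mpr (by nlinarith)
  constructor <;> linarith [exp_pos (-(b * t))]

lemma abs_twoRateEntry_sub_one_le {a b t : ℝ} (ha : 0 ≤ a) (hab : a < b) (ht : 0 ≤ t) :
    |twoRateEntry a b t - 1| ≤ (a + b) * t := by
  rw [abs_sub_comm, abs_of_nonneg (sub_nonneg.mpr (abs_le.mp (abs_twoRateEntry_le_one ha hab ht)).2),
    twoRateEntry_eq hab.ne]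
  have hgap_le := mul_le_mul_of_nonneg_left (exp_neg_sub_exp_neg_div_le hab t) ha
  have hdecay : exp (-(a * t)) ≤ 1 := exp_le_one_iff.mpr (by nlinarith)
  have := mul_le_mul_of_nonneg_left hdecay (mul_nonneg ha ht)
  linarith [add_one_le_exp (-(b * t))]

/-- Overdamped oscillator entry `B₂₂(s)` satisfies `|B₂₂(s)| ≤ 1` and
`|B₂₂(s) − 1| ≤ 2ζωs` for `s ≥ 0`. -/
theorem stmt_10 (ω ζ s : ℝ) (hω : 0 < ω) (hζ : 1 < ζ) (hs : 0 ≤ s) :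
    |(ζ * (Real.exp (ω * s * (-ζ - Real.sqrt (ζ ^ 2 - 1))) -
            Real.exp (ω * s * (-ζ + Real.sqrt (ζ ^ 2 - 1)))) +
        Real.sqrt (ζ ^ 2 - 1) *
          (Real.exp (ω * s * (-ζ - Real.sqrt (ζ ^ 2 - 1))) +
            Real.exp (ω * s * (-ζ + Real.sqrt (ζ ^ 2 - 1))))) /
        (2 * Real.sqrt (ζ ^ 2 - 1))| ≤ 1 ∧
    |(ζ * (Real.exp (ω * s * (-ζ - Real.sqrt (ζ ^ 2 - 1))) -
            Real.exp (ω * s * (-ζ + Real.sqrt (ζ ^ 2 - 1)))) +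
        Real.sqrt (ζ ^ 2 - 1) *
          (Real.exp (ω * s * (-ζ - Real.sqrt (ζ ^ 2 - 1))) +
            Real.exp (ω * s * (-ζ + Real.sqrt (ζ ^ 2 - 1))))) /
        (2 * Real.sqrt (ζ ^ 2 - 1)) - 1| ≤ 2 * ζ * ω * s := by
  set r := Real.sqrt (ζ ^ 2 - 1)
  have hr : 0 < r := sqrt_pos.mpr (by nlinarith)
  have hr_lt : r < ζ := by
    rw [sqrt_lt' (by linarith)]
    linarith
  have hentry : (ζ * (exp (ω * s * (-ζ - r)) - exp (ω * s * (-ζ + r))) +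
      r * (exp (ω * s * (-ζ - r)) + exp (ω * s * (-ζ + r)))) / (2 * r) =
      twoRateEntry (ζ - r) (ζ + r) (ω * s) := by
    unfold twoRateEntry
    rw [show ζ + r - (ζ - r) = 2 * r by ring]
    congr 1
    ring_nf
  have hrates : ζ - r < ζ + r := by linarith
  have ht : 0 ≤ ω * s := mul_nonneg hω.le hs
  rw [hentry, show 2 * ζ * ω * s = (ζ - r + (ζ + r)) * (ω * s) by ring]
  exact ⟨abs_twoRateEntry_le_one (by linarith) hrates ht,
    abs_twoRateEntry_sub_one_le (by linarith) hrates ht⟩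
end
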